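/- arXiv:2111.05532 — 2 statements merged into one kernel-verified Lean document; each statement's English description precedes it below -/
import Mathlib

section
/- Let X = ∏_{α∈A} X_α be a product of nonempty compact metric spaces, P ⊆ X closed, and f : P → P a homeomorphism with f(P^{(κ)}) = P^{(κ)} for every cardinal κ. Let λ < μ be infinite cardinals, let C ⊆ A be an f-admissible set of cardinality λ with π_C^{-1}(P_C^{(λ)}) = P^{(λ)} (where P_C^{(λ)} = π_C(P^{(λ)})), and let B ⊆ A be an f-admissible set of cardinality μ containing C such that: π_B^{-1}(π_B(P^{(μ)})) = P^{(μ)}; every compact set F ⊆ P_B ∖ π_B(P^{(λ)}) is μ-negligible in X_B; and every α ∈ B is contained in a countable f-admissible set B(α) ⊆ B. Then for any σ-compact set F ⊆ P_C ∖ P_C^{(λ)} and any f-admissible set Γ ⊆ B containing C with Γ∖C countable, there exists an f-admissible set Λ with Γ ⊆ Λ ⊆ B such that Λ∖C is countable and for all x ∈ F the sets π^Λ_{Λ∖C}((π^Λ_C)^{-1}(x) ∩ P_Λ) and π^Λ_{Λ∖C}((π^Λ_C)^{-1}(f_C(x)) ∩ P_Λ) are nowhere dense in X_{Λ∖C}, where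 f_C is the homeomorphism of P_C induced by f and π^Λ_C : X_Λ → X_C, π^Λ_{Λ∖C} : X_Λ → X_{Λ∖C} are the projections. -/
universe u

open Set

/-- The projection of the product `∀ i, X i` onto the partial product indexed by `B`. -/
def proj {I : Type u} {X : I → Type u} (B : Set I) (x : ∀ i, X i) : ∀ b : B, X b :=
  fun b => x b

/-- The projection of a partial product indexed by `B` onto the one indexed by `C ⊆ B`. -/
def projRes {I : Type u} {X : I → Type u} {B C : Set I} (h : C ⊆ B) (y : ∀ b : B, X b) :
    ∀ c : C, X c := fun c => y ⟨c.1, h c.2⟩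

/-- The projection of a partial product indexed by `B` onto the one indexed by `B \ C`. -/
def projDiff {I : Type u} {X : I → Type u} {B C : Set I} (y : ∀ b : B, X b) :
    ∀ d : (B \ C : Set I), X d := fun d => y ⟨d.1, d.2.1⟩

/-- A set `B ⊆ I` is `f`-admissible for a homeomorphism `f : P ≃ₜ P` of a closed subset `P`
of the product `∀ i, X i` if there is a homeomorphism `f_B` of `P_B = π_B(P)` with
`π_B ∘ f = f_B ∘ π_B` on `P`. -/
def IsAdmissible {I : Type u} {X : I → Type u} [∀ i, TopologicalSpace (X i)]
    (P : Set (∀ i, X i)) (f : P ≃ₜ P) (B : Set I) : Prop :=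
  ∃ fB : (proj B '' P : Set (∀ b : B, X b)) ≃ₜ (proj B '' P : Set (∀ b : B, X b)),
    ∀ p : P, (fB ⟨proj B p.1, ⟨p.1, p.2, rfl⟩⟩).1 = proj B (f p).1

/-- The `λ`-interior of a set `P` in a topological space `Z`: for infinite `λ`, the set of
points `x ∈ P` that are contained in a `G_λ`-subset (an intersection of at most `λ` open sets)
of `Z` lying inside `P`; for finite `λ`, the ordinary interior of `P`. -/
def lamInterior {Z : Type u} [TopologicalSpace Z] (lam : Cardinal.{u}) (P : Set Z) : Set Z :=
  if lam < Cardinal.aleph0 then interior P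
  else {x | x ∈ P ∧ ∃ K : Set Z,
    (∃ S : Set (Set Z), (∀ U ∈ S, IsOpen U) ∧ Cardinal.mk S ≤ lam ∧ K = ⋂₀ S) ∧ x ∈ K ∧ K ⊆ P}

/-- A set `Q` is `μ`-negligible in `Z` if its `λ`-interior is empty for every `λ < μ`. -/
def IsNegligible {Z : Type u} [TopologicalSpace Z] (μ : Cardinal.{u}) (Q : Set Z) : Prop :=
  ∀ lam < μ, lamInterior lam Q = ∅

/-- The image of a subset `S` of the ambient space under a homeomorphism `f : P ≃ₜ K`
between subspaces, i.e. `f(S ∩ P)` viewed in the ambient space of `K`. -/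
def imageOn {Z W : Type u} [TopologicalSpace Z] [TopologicalSpace W] {P : Set Z} {K : Set W}
    (f : P ≃ₜ K) (S : Set Z) : Set W :=
  Subtype.val '' (⇑f '' (Subtype.val ⁻¹' S))


/-!
For `x ∈ P_C ∖ P_C^{(λ)}` the fibre `K_x = P_B ∩ (π^B_C)⁻¹(x)` is a compact subset of
`P_B ∖ π_B(P^{(λ)})`, so it has empty `λ`-interior in `X_B`. Fix a countable `D ⊆ B ∖ C` and a
nonempty open `V ⊆ X_D`. If `π_E(K_x)` contained the cylinder over `V` for every countable
`E ⊇ D`, then, as `K_x` is closed and basic open sets depend on finitely many coordinates, `K_x`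
would contain the `G_λ`-set `{y | y|_C = x, y|_D ∈ V}`. So some countable `E` breaks the
inclusion; as the set of `x` for which a given `E` does not break it is closed, compactness gives
one `E` for all `x` in a compact set, hence in the σ-compact set `F ∪ f_C(F)`. Closing `Γ ∖ C`
off countably many times under this operation (for a countable base of `X_D`) and under
`α ↦ B(α)` gives `Λ`: a nonempty open subset of `π_{Λ∖C}(K_x)` would contain the cylinder over a
nonempty open set at some stage, which the next stage excludes.
-/

open Topology TopologicalSpace

section Projections

variable {I : Type u} {X : I → Type u}

theorem projRes_surjective [∀ i, Nonempty (X i)] {B C : Set I} (h : C ⊆ B) :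
    Function.Surjective (projRes (X := X) h) := by
  classical
  intro z
  refine ⟨fun b => if hb : b.1 ∈ C then z ⟨b, hb⟩ else Classical.arbitrary _, funext fun c => ?_⟩
  simp only [projRes, dif_pos c.2]

theorem exists_projRes_eq_and_projRes_eq [∀ i, Nonempty (X i)] {B C D : Set I} (hCB : C ⊆ B)
    (hDB : D ⊆ B) (hCD : Disjoint C D) (x : ∀ c : C, X c) (v : ∀ d : D, X d) :
    ∃ y : ∀ b : B, X b, projRes hCB y = x ∧ projRes hDB y = v := by
  classical
  refine ⟨fun b => if hb : b.1 ∈ C then x ⟨b, hb⟩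
    else if hd : b.1 ∈ D then v ⟨b, hd⟩ else Classical.arbitrary _,
    funext fun c => ?_, funext fun d => ?_⟩
  · simp only [projRes, dif_pos c.2]
  · simp only [projRes, dif_neg (hCD.notMem_of_mem_right d.2), dif_pos d.2]

theorem inter_preimage_projRes_subset_diff {P Q : Set (∀ i, X i)} {B C : Set I} (hCB : C ⊆ B)
    {x : ∀ c : C, X c} (hx : x ∉ proj C '' Q) :
    proj B '' P ∩ projRes hCB ⁻¹' {x} ⊆ proj B '' P \ proj B '' Q := by
  rintro _ ⟨hy, hyx⟩
  refine ⟨hy, ?_⟩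
  rintro ⟨q, hq, rfl⟩
  exact hx ⟨q, hq, hyx⟩

theorem image_projDiff_eq {P : Set (∀ i, X i)} {B C Λ : Set I} (hCΛ : C ⊆ Λ) (hΛB : Λ ⊆ B)
    (x : ∀ c : C, X c) :
    projDiff (C := C) '' ({y : ∀ b : Λ, X b | projRes hCΛ y = x} ∩ proj Λ '' P) =
      projRes (sdiff_subset.trans hΛB) '' (proj B '' P ∩ projRes (hCΛ.trans hΛB) ⁻¹' {x}) := by
  ext w
  constructor
  · rintro ⟨_, ⟨hyx, p, hp, rfl⟩, rfl⟩
    exact ⟨proj B p, ⟨⟨p, hp, rfl⟩, hyx⟩, rfl⟩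
  · rintro ⟨_, ⟨⟨p, hp, rfl⟩, hpx⟩, rfl⟩
    exact ⟨proj Λ p, ⟨hpx, p, hp, rfl⟩, rfl⟩

variable [∀ i, TopologicalSpace (X i)]

theorem continuous_proj (B : Set I) : Continuous (proj (X := X) B) :=
  continuous_pi fun b => continuous_apply b.1

theorem continuous_projRes {B C : Set I} (h : C ⊆ B) : Continuous (projRes (X := X) h) :=
  continuous_pi fun _ => continuous_apply _

end Projections

theorem exists_monotone_seq {α : Type*} (p : Set α → Prop) (R : Set α → Set α → Prop)
    (h : ∀ D, p D → ∃ E, p E ∧ D ⊆ E ∧ R D E) {D₀ : Set α} (hD₀ : p D₀) :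
    ∃ D : ℕ → Set α, D 0 = D₀ ∧ Monotone D ∧ (∀ n, p (D n)) ∧ ∀ n, R (D n) (D (n + 1)) := by
  choose! next hnext_p hnext_sup hnext_R using h
  have hp (n : ℕ) : p (next^[n] D₀) := by
    induction n with
    | zero => exact hD₀
    | succ n ih => rw [Function.iterate_succ_apply']; exact hnext_p _ ih
  refine ⟨fun n => next^[n] D₀, rfl, monotone_nat_of_le_succ fun n => ?_, hp, fun n => ?_⟩ <;>
    simp only [Function.iterate_succ_apply']
  exacts [hnext_sup _ (hp n), hnext_R _ (hp n)]

section Admissible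

variable {I : Type u} {X : I → Type u}

def PreservesFibers (P : Set (∀ i, X i)) (S : Set I) (g : P → P) : Prop :=
  ∀ p q : P, proj S p.1 = proj S q.1 → proj S (g p).1 = proj S (g q).1

theorem preservesFibers_sUnion {P : Set (∀ i, X i)} {g : P → P} {𝒮 : Set (Set I)}
    (h : ∀ S ∈ 𝒮, PreservesFibers P S g) : PreservesFibers P (⋃₀ 𝒮) g := by
  intro p q hpq
  funext ⟨a, S, hS, haS⟩
  exact congrFun (h S hS p q (funext fun b => congrFun hpq ⟨b, S, hS, b.2⟩)) ⟨a, haS⟩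

variable [∀ i, TopologicalSpace (X i)] {P : Set (∀ i, X i)} {f : P ≃ₜ P} {S : Set I}

theorem isAdmissible_iff :
    IsAdmissible P f S ↔ ∃ fS : proj S '' P ≃ₜ proj S '' P,
      ∀ p, fS (imageFactorization (proj S) P p) = imageFactorization (proj S) P (f p) :=
  exists_congr fun _ => forall_congr' fun _ => by rw [Subtype.ext_iff]; rfl

theorem IsAdmissible.preservesFibers (h : IsAdmissible P f S) : PreservesFibers P S f := by
  obtain ⟨fS, hfS⟩ := isAdmissible_iff.1 h
  intro p q hpq
  have hπ : imageFactorization (proj S) P p = imageFactorization (proj S) P q := Subtype.ext hpq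
  have := congrArg (fun y => (fS y).1) hπ
  simp only [hfS] at this
  exact this

theorem IsAdmissible.symm (h : IsAdmissible P f S) : IsAdmissible P f.symm S := by
  obtain ⟨fS, hfS⟩ := isAdmissible_iff.1 h
  refine isAdmissible_iff.2 ⟨fS.symm, fun p => fS.symm_apply_eq.2 ?_⟩
  rw [hfS, f.apply_symm_apply]

theorem isAdmissible_of_preservesFibers [∀ i, T2Space (X i)] (hP : IsCompact P)
    (hf : PreservesFibers P S f) (hf' : PreservesFibers P S f.symm) : IsAdmissible P f S := by
  have : CompactSpace P := isCompact_iff_compactSpace.mp hP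
  let π : C(P, proj S '' P) :=
    ⟨imageFactorization (proj S) P, ((continuous_proj S).comp continuous_subtype_val).subtype_mk _⟩
  have hπ : IsQuotientMap π := .of_surjective_continuous imageFactorization_surjective π.continuous
  have descend (g : P ≃ₜ P) (hg : PreservesFibers P S g) :
      ∃ G : C(proj S '' P, proj S '' P), ∀ p, G (π p) = π (g p) :=
    have hgπ : Function.FactorsThrough (π.comp (g : C(P, P))) π :=
      fun a b hab => Subtype.ext (hg a b (congrArg Subtype.val hab))
    ⟨hπ.lift _ hgπ, DFunLike.congr_fun (hπ.lift_comp _ hgπ)⟩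
  obtain ⟨G, hG⟩ := descend f hf
  obtain ⟨G', hG'⟩ := descend f.symm hf'
  have hinv (y) : G' (G y) = y ∧ G (G' y) = y := by
    obtain ⟨p, rfl⟩ : ∃ p, π p = y := imageFactorization_surjective y
    rw [hG, hG', hG', hG, f.symm_apply_apply, f.apply_symm_apply]
    exact ⟨rfl, rfl⟩
  exact isAdmissible_iff.2 ⟨⟨⟨G, G', fun y => (hinv y).1, fun y => (hinv y).2⟩,
    G.continuous, G'.continuous⟩, hG⟩

theorem isAdmissible_sUnion [∀ i, T2Space (X i)] (hP : IsCompact P) {𝒮 : Set (Set I)}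
    (h : ∀ S ∈ 𝒮, IsAdmissible P f S) : IsAdmissible P f (⋃₀ 𝒮) :=
  isAdmissible_of_preservesFibers hP (preservesFibers_sUnion fun S hS => (h S hS).preservesFibers)
    (preservesFibers_sUnion fun S hS => (h S hS).symm.preservesFibers)

theorem imageOn_subset_diff {C : Set I} {fC : proj C '' P ≃ₜ proj C '' P}
    (hfC : ∀ p : P, (fC ⟨proj C p.1, ⟨p.1, p.2, rfl⟩⟩).1 = proj C (f p).1)
    {Q : Set (∀ i, X i)} (hQ : imageOn f Q = Q) {F : Set (∀ c : C, X c)}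
    (hF : F ⊆ proj C '' P \ proj C '' Q) : imageOn fC F ⊆ proj C '' P \ proj C '' Q := by
  rintro _ ⟨_, ⟨⟨_, p, hp, rfl⟩, hpF, rfl⟩, rfl⟩
  refine ⟨(fC _).2, ?_⟩
  rintro ⟨q, hq, hqp⟩
  rw [← hQ] at hq
  obtain ⟨_, ⟨r, hr, rfl⟩, rfl⟩ := hq
  have hpr : fC ⟨proj C p, p, hp, rfl⟩ = fC ⟨proj C r, r.1, r.2, rfl⟩ :=
    Subtype.ext (hqp.symm.trans (hfC r).symm)
  exact (hF hpF).2 ⟨r, hr, congrArg Subtype.val (fC.injective hpr).symm⟩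

theorem exists_isAdmissible_diff_eq_iUnion [∀ i, T2Space (X i)] (hP : IsCompact P)
    {B C Γ : Set I} (hΓB : Γ ⊆ B) (hΓ : IsAdmissible P f Γ) (hΓC : (Γ \ C).Countable)
    (hB : ∀ α ∈ B, ∃ Bα : Set I, α ∈ Bα ∧ Bα.Countable ∧ Bα ⊆ B ∧ IsAdmissible P f Bα)
    (R : Set I → Set I → Prop) (hRmono : ∀ D E E', R D E → D ⊆ E → E ⊆ E' → R D E')
    (hR : ∀ D, D.Countable → D ⊆ B \ C → ∃ E, E.Countable ∧ D ⊆ E ∧ E ⊆ B \ C ∧ R D E) :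
    ∃ Λ, Γ ⊆ Λ ∧ Λ ⊆ B ∧ IsAdmissible P f Λ ∧ ∃ D : ℕ → Set I, Monotone D ∧
      Λ \ C = ⋃ n, D n ∧ (∀ n, (D n).Countable) ∧ ∀ n, R (D n) (D (n + 1)) := by
  choose! Bα hαBα hBαc hBαB hBαadm using hB
  obtain ⟨D, hD0, hD, hDBC, hDR⟩ := exists_monotone_seq
    (fun D => D.Countable ∧ D ⊆ B \ C) (fun D E => R D E ∧ ∀ α ∈ D, Bα α \ C ⊆ E)
    (fun D ⟨hD, hDBC⟩ => by
      obtain ⟨E, hE, hDE, hEBC, hDRE⟩ := hR D hD hDBC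
      refine ⟨E ∪ ⋃ α ∈ D, Bα α \ C,
        ⟨hE.union (hD.biUnion fun α hα => (hBαc α (hDBC hα).1).mono sdiff_subset),
          union_subset hEBC (iUnion₂_subset fun α hα =>
            sdiff_subset_sdiff_left (hBαB α (hDBC hα).1))⟩,
        hDE.trans subset_union_left, hRmono _ _ _ hDRE hDE subset_union_left,
        fun α hα => (subset_biUnion_of_mem (u := fun α => Bα α \ C) hα).trans subset_union_right⟩)
    ⟨hΓC, sdiff_subset_sdiff_left hΓB⟩
  have hDB (α : I) (hα : α ∈ ⋃ n, D n) : α ∈ B := by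
    obtain ⟨n, hn⟩ := mem_iUnion.1 hα
    exact ((hDBC n).2 hn).1
  let Λ := Γ ∪ ⋃ α ∈ ⋃ n, D n, Bα α
  have hΛC : Λ \ C = ⋃ n, D n := by
    refine Subset.antisymm ?_ fun a ha => ?_
    · rintro a ⟨ha | ha, haC⟩
      · exact mem_iUnion_of_mem 0 (hD0 ▸ ⟨ha, haC⟩)
      · obtain ⟨α, hα, haα⟩ := mem_iUnion₂.1 ha
        obtain ⟨n, hn⟩ := mem_iUnion.1 hα
        exact mem_iUnion_of_mem (n + 1) ((hDR n).2 α hn ⟨haα, haC⟩)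
    · obtain ⟨n, hn⟩ := mem_iUnion.1 ha
      exact ⟨Or.inr (mem_biUnion ha (hαBα a (hDB a ha))), ((hDBC n).2 hn).2⟩
  have hΛadm : IsAdmissible P f Λ := by
    have hΛ : Λ = ⋃₀ insert Γ (Bα '' ⋃ n, D n) := by rw [sUnion_insert, sUnion_image]
    rw [hΛ]
    refine isAdmissible_sUnion hP ?_
    rintro S (rfl | ⟨α, hα, rfl⟩)
    exacts [hΓ, hBαadm α (hDB α hα)]
  exact ⟨Λ, subset_union_left, union_subset hΓB (iUnion₂_subset fun α hα => hBαB α (hDB α hα)),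
    hΛadm, D, hD, hΛC, fun n => (hDBC n).1, fun n => (hDR n).1⟩

end Admissible

theorem IsSigmaCompact.union {Z : Type*} [TopologicalSpace Z] {s t : Set Z}
    (hs : IsSigmaCompact s) (ht : IsSigmaCompact t) : IsSigmaCompact (s ∪ t) := by
  rw [union_eq_iUnion]
  exact isSigmaCompact_iUnion _ fun b => by cases b <;> assumption

theorem IsSigmaCompact.imageOn {Z W : Type u} [TopologicalSpace Z] [TopologicalSpace W]
    {S : Set Z} (hS : IsClosed S) {T : Set W} (g : S ≃ₜ T) {F : Set Z} (hF : IsSigmaCompact F) :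
    IsSigmaCompact (imageOn g F) := by
  obtain ⟨K, hK, rfl⟩ := hF
  have hpre : IsSigmaCompact (Subtype.val ⁻¹' ⋃ n, K n : Set S) :=
    ⟨fun n => Subtype.val ⁻¹' K n,
      fun n => hS.isClosedEmbedding_subtypeVal.isCompact_preimage (hK n), preimage_iUnion.symm⟩
  rw [_root_.imageOn, image_image]
  exact hpre.image (continuous_subtype_val.comp g.continuous)

theorem mem_of_forall_finset_exists_eqOn {ι : Type*} {Y : ι → Type*}
    [∀ i, TopologicalSpace (Y i)] {K : Set (∀ i, Y i)} (hK : IsClosed K) {y : ∀ i, Y i}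
    (h : ∀ J : Finset ι, ∃ k ∈ K, ∀ j ∈ J, k j = y j) : y ∈ K := by
  refine hK.closure_subset (mem_closure_iff.2 fun U hU hyU => ?_)
  obtain ⟨J, u, hu, hJU⟩ := isOpen_pi_iff.1 hU y hyU
  obtain ⟨k, hk, hkJ⟩ := h J
  exact ⟨k, hJU fun j hj => (hkJ j hj).symm ▸ (hu j hj).2, hk⟩

theorem subset_lamInterior_of_iInter {Z : Type u} [TopologicalSpace Z] {lam : Cardinal.{u}}
    {ι : Type u} {U : ι → Set Z} (hU : ∀ i, IsOpen (U i)) (hι : Cardinal.mk ι ≤ lam)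
    (hlam : Cardinal.aleph0 ≤ lam) {Q : Set Z} (hUQ : ⋂ i, U i ⊆ Q) :
    ⋂ i, U i ⊆ lamInterior lam Q := by
  intro z hz
  rw [lamInterior, if_neg hlam.not_gt]
  exact ⟨hUQ hz, ⋂ i, U i, ⟨range U, forall_mem_range.2 hU, Cardinal.mk_range_le.trans hι,
    (sInter_range U).symm⟩, hz, hUQ⟩

section Cylinders

variable {I : Type u} {X : I → Type u} {B D E : Set I}

def CoversCylinder (K : Set (∀ b : B, X b)) (V : Set (∀ d : D, X d)) (E : Set I) : Prop :=
  ∃ (hDE : D ⊆ E) (hEB : E ⊆ B), projRes hDE ⁻¹' V ⊆ projRes hEB '' K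

variable {K : Set (∀ b : B, X b)} {V W : Set (∀ d : D, X d)}

theorem coversCylinder_iff (hDE : D ⊆ E) (hEB : E ⊆ B) :
    CoversCylinder K V E ↔ projRes hDE ⁻¹' V ⊆ projRes hEB '' K :=
  ⟨fun ⟨_, _, h⟩ => h, fun h => ⟨hDE, hEB, h⟩⟩

theorem CoversCylinder.mono (h : CoversCylinder K W E) (hVW : V ⊆ W) : CoversCylinder K V E :=
  let ⟨hDE, hEB, hW⟩ := h
  ⟨hDE, hEB, (preimage_mono hVW).trans hW⟩

theorem CoversCylinder.of_superset [∀ i, Nonempty (X i)] {E' : Set I}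
    (h : CoversCylinder K V E') (hDE : D ⊆ E) (hEE' : E ⊆ E') : CoversCylinder K V E := by
  obtain ⟨_, hE'B, hV⟩ := h
  refine ⟨hDE, hEE'.trans hE'B, fun z hz => ?_⟩
  obtain ⟨z', rfl⟩ := projRes_surjective hEE' z
  obtain ⟨k, hk, hkz⟩ := hV (show projRes hDE (projRes hEE' z') ∈ V from hz)
  exact ⟨k, hk, by rw [← hkz]; rfl⟩

variable [∀ i, TopologicalSpace (X i)]

def AvoidsCylinders (K : Set (∀ b : B, X b)) (D E : Set I) : Prop :=
  ∀ V : Set (∀ d : D, X d), IsOpen V → V.Nonempty → ¬ CoversCylinder K V E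

theorem AvoidsCylinders.mono [∀ i, Nonempty (X i)] {E' : Set I} (h : AvoidsCylinders K D E)
    (hDE : D ⊆ E) (hEE' : E ⊆ E') : AvoidsCylinders K D E' :=
  fun V hV hVne hcov => h V hV hVne (hcov.of_superset hDE hEE')

theorem isClosed_setOf_coversCylinder [∀ i, T2Space (X i)] {C : Set I} (hCB : C ⊆ B)
    {L : Set (∀ b : B, X b)} (hL : IsCompact L) (hDE : D ⊆ E) (hEB : E ⊆ B)
    (V : Set (∀ d : D, X d)) :
    IsClosed {x : ∀ c : C, X c | CoversCylinder (L ∩ projRes hCB ⁻¹' {x}) V E} := by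
  have hfib : {x : ∀ c : C, X c | CoversCylinder (L ∩ projRes hCB ⁻¹' {x}) V E} =
      ⋂ z ∈ projRes hDE ⁻¹' V, projRes hCB '' (L ∩ projRes hEB ⁻¹' {z}) := by
    ext x
    simp only [mem_ofPred_eq, coversCylinder_iff hDE hEB, mem_iInter₂]
    exact forall₂_congr fun z _ =>
      ⟨fun ⟨k, ⟨hkL, hkx⟩, hkz⟩ => ⟨k, ⟨hkL, hkz⟩, hkx⟩,
        fun ⟨k, ⟨hkL, hkz⟩, hkx⟩ => ⟨k, ⟨hkL, hkx⟩, hkz⟩⟩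
  rw [hfib]
  exact isClosed_biInter fun z _ => ((hL.inter_right (isClosed_singleton.preimage
    (continuous_projRes hEB))).image (continuous_projRes hCB)).isClosed

theorem exists_isOpen_preimage_projRes_subset {M : Set I} {D : ℕ → Set I} (hD : Monotone D)
    (hDM : ∀ n, D n ⊆ M) (hM : M ⊆ ⋃ n, D n) {U : Set (∀ m : M, X m)} (hU : IsOpen U)
    (hUne : U.Nonempty) :
    ∃ n, ∃ V : Set (∀ d : D n, X d), IsOpen V ∧ V.Nonempty ∧ projRes (hDM n) ⁻¹' V ⊆ U := by
  obtain ⟨z, hz⟩ := hUne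
  obtain ⟨J, u, hu, hJU⟩ := isOpen_pi_iff.1 hU z hz
  obtain ⟨n, hn⟩ := hD.directed_le.exists_mem_subset_of_finset_subset_biUnion
    (s := J.map (Function.Embedding.subtype _)) (by
      rw [Finset.coe_map]
      rintro _ ⟨j, -, rfl⟩
      exact hM j.2)
  have hJn (j : J) : j.1.1 ∈ D n := hn (Finset.mem_map_of_mem _ j.2)
  refine ⟨n, ⋂ j : J, (fun w => w ⟨j.1.1, hJn j⟩) ⁻¹' u j,
    isOpen_iInter_of_finite fun j => (hu j j.2).1.preimage (continuous_apply (⟨j, hJn j⟩ : D n)),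
    ⟨projRes (hDM n) z, mem_iInter.2 fun j => (hu j j.2).2⟩,
    fun y hy => hJU fun j hj => mem_iInter.1 hy ⟨j, hj⟩⟩

theorem isNowhereDense_image_projRes [∀ i, T2Space (X i)] [∀ i, Nonempty (X i)] {M : Set I}
    (hMB : M ⊆ B) {K : Set (∀ b : B, X b)} (hK : IsCompact K) {D : ℕ → Set I}
    (hD : Monotone D) (hDM : ∀ n, D n ⊆ M) (hM : M ⊆ ⋃ n, D n)
    (hKD : ∀ n, AvoidsCylinders K (D n) (D (n + 1))) : IsNowhereDense (projRes hMB '' K) := by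
  rw [(hK.image (continuous_projRes hMB)).isClosed.isNowhereDense_iff, ← not_nonempty_iff_eq_empty]
  intro hne
  obtain ⟨n, V, hV, hVne, hVK⟩ :=
    exists_isOpen_preimage_projRes_subset hD hDM hM isOpen_interior hne
  have hcov : CoversCylinder K V M := ⟨hDM n, hMB, hVK.trans interior_subset⟩
  exact hKD n V hV hVne (hcov.of_superset (hD n.le_succ) (hDM (n + 1)))

end Cylinders

section Metric

variable {I : Type u} {X : I → Type u} [∀ i, MetricSpace (X i)]
  {B C D : Set I} (hCB : C ⊆ B) {lam : Cardinal.{u}} (hlam : Cardinal.aleph0 ≤ lam)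
  (hC : Cardinal.mk C ≤ lam)
include hCB hlam hC

/-- `O ∩ (π^B_C)⁻¹(x)` is a `G_λ`-set: each of the `≤ λ` coordinate conditions is a countable
intersection of balls. -/
theorem inter_preimage_projRes_subset_lamInterior {O Q : Set (∀ b : B, X b)} (hO : IsOpen O)
    {x : ∀ c : C, X c} (hOQ : O ∩ projRes hCB ⁻¹' {x} ⊆ Q) :
    O ∩ projRes hCB ⁻¹' {x} ⊆ lamInterior lam Q := by
  let U : Option (C × ULift.{u} ℕ) → Set (∀ b : B, X b)
    | none => O
    | some (c, n) => {y | dist (y ⟨c, hCB c.2⟩) (x c) < 1 / (n.down + 1)}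
  have hU : ⋂ i, U i = O ∩ projRes hCB ⁻¹' {x} := by
    ext y
    simp only [mem_iInter, Option.forall, mem_inter_iff, mem_preimage, mem_singleton_iff,
      Prod.forall, ULift.forall, U, mem_ofPred_eq]
    refine and_congr_right fun _ => ⟨fun h => funext fun c => ?_, ?_⟩
    · refine eq_of_forall_dist_le fun ε hε => ?_
      obtain ⟨n, hn⟩ := exists_nat_one_div_lt hε
      exact ((h c n).trans hn).le
    · rintro rfl c n
      simp only [projRes, dist_self]
      positivity
  have hcard : Cardinal.mk (Option (C × ULift.{u} ℕ)) ≤ lam := by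
    rw [Cardinal.mk_option, Cardinal.mk_prod, Cardinal.mk_uLift, Cardinal.mk_nat]
    simp only [Cardinal.lift_id, Cardinal.lift_aleph0]
    calc Cardinal.mk C * Cardinal.aleph0 + 1 ≤ lam * Cardinal.aleph0 + 1 := by gcongr
      _ = lam := by rw [Cardinal.mul_aleph0_eq hlam, Cardinal.add_one_eq hlam]
  rw [← hU] at hOQ ⊢
  refine subset_lamInterior_of_iInter (fun i => ?_) hcard hlam hOQ
  rcases i with _ | ⟨c, n⟩
  exacts [hO, isOpen_lt ((continuous_apply _).dist continuous_const) continuous_const]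

variable [∀ i, Nonempty (X i)]

theorem lamInterior_nonempty_of_forall_coversCylinder {K : Set (∀ b : B, X b)} (hK : IsClosed K)
    {x : ∀ c : C, X c} (hKx : K ⊆ projRes hCB ⁻¹' {x}) (hD : D.Countable) (hDBC : D ⊆ B \ C)
    {V : Set (∀ d : D, X d)} (hV : IsOpen V) (hVne : V.Nonempty)
    (hcov : ∀ E : Set I, E.Countable → D ⊆ E → E ⊆ B \ C → CoversCylinder K V E) :
    (lamInterior lam K).Nonempty := by
  have hDB : D ⊆ B := fun i hi => (hDBC hi).1
  have hsub : projRes hDB ⁻¹' V ∩ projRes hCB ⁻¹' {x} ⊆ K := by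
    rintro y ⟨hyV, hyx⟩
    refine mem_of_forall_finset_exists_eqOn hK fun J => ?_
    have hJ : (Subtype.val '' (J : Set B) \ C).Countable :=
      ((J.finite_toSet.image _).sdiff).countable
    obtain ⟨hDE, hEB, hcyl⟩ := hcov _ (hD.union hJ) subset_union_left
      (union_subset hDBC (sdiff_subset_sdiff_left (image_subset_iff.2 fun b _ => b.2)))
    obtain ⟨k, hk, hky⟩ := hcyl (show projRes hDE (projRes hEB y) ∈ V from hyV)
    refine ⟨k, hk, fun j hj => ?_⟩
    by_cases hjC : j.1 ∈ C
    · exact (congrFun (hKx hk) ⟨j, hjC⟩).trans (congrFun hyx ⟨j, hjC⟩).symm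
    · exact congrFun hky ⟨j, Or.inr ⟨⟨j, hj, rfl⟩, hjC⟩⟩
  obtain ⟨v, hv⟩ := hVne
  obtain ⟨y, hyx, hyv⟩ := exists_projRes_eq_and_projRes_eq hCB hDB
    (disjoint_left.2 fun i hiC hiD => (hDBC hiD).2 hiC) x v
  exact ⟨y, inter_preimage_projRes_subset_lamInterior hCB hlam hC
    (hV.preimage (continuous_projRes hDB)) hsub ⟨by rwa [mem_preimage, hyv], hyx⟩⟩

variable {L : Set (∀ b : B, X b)} (hL : IsCompact L)
include hL

theorem exists_countable_forall_not_coversCylinder {F' : Set (∀ c : C, X c)} (hF' : IsCompact F')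
    (hneg : ∀ x ∈ F', lamInterior lam (L ∩ projRes hCB ⁻¹' {x}) = ∅) (hD : D.Countable)
    (hDBC : D ⊆ B \ C) {V : Set (∀ d : D, X d)} (hV : IsOpen V) (hVne : V.Nonempty) :
    ∃ E : Set I, E.Countable ∧ D ⊆ E ∧ E ⊆ B \ C ∧
      ∀ x ∈ F', ¬ CoversCylinder (L ∩ projRes hCB ⁻¹' {x}) V E := by
  by_contra! hbad
  let ι := {E : Set I // E.Countable ∧ D ⊆ E ∧ E ⊆ B \ C}
  have : Nonempty ι := ⟨⟨D, hD, subset_rfl, hDBC⟩⟩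
  let A (E : ι) : Set (∀ c : C, X c) :=
    F' ∩ {x | CoversCylinder (L ∩ projRes hCB ⁻¹' {x}) V E.1}
  have hA (E : ι) : IsClosed (A E) := hF'.isClosed.inter
    (isClosed_setOf_coversCylinder hCB hL E.2.2.1 (fun i hi => (E.2.2.2 hi).1) V)
  have hAdir : Directed (· ⊇ ·) A := fun E E' =>
    ⟨⟨E.1 ∪ E'.1, E.2.1.union E'.2.1, E.2.2.1.trans subset_union_left,
      union_subset E.2.2.2 E'.2.2.2⟩,
      fun x hx => ⟨hx.1, hx.2.of_superset E.2.2.1 subset_union_left⟩,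
      fun x hx => ⟨hx.1, hx.2.of_superset E'.2.2.1 subset_union_right⟩⟩
  obtain ⟨x, hx⟩ := IsCompact.nonempty_iInter_of_directed_nonempty_isCompact_isClosed A hAdir
    (fun E => hbad E.1 E.2.1 E.2.2.1 E.2.2.2)
    (fun E => hF'.of_isClosed_subset (hA E) inter_subset_left) hA
  rw [mem_iInter] at hx
  refine (lamInterior_nonempty_of_forall_coversCylinder hCB hlam hC
    (hL.isClosed.inter (isClosed_singleton.preimage (continuous_projRes hCB))) inter_subset_right
    hD hDBC hV hVne fun E hE hDE hEBC => (hx ⟨E, hE, hDE, hEBC⟩).2).ne_empty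
    (hneg x (hx ⟨D, hD, subset_rfl, hDBC⟩).1)

theorem exists_countable_forall_avoidsCylinders [∀ i, CompactSpace (X i)]
    {F' : Set (∀ c : C, X c)} (hF' : IsSigmaCompact F')
    (hneg : ∀ x ∈ F', lamInterior lam (L ∩ projRes hCB ⁻¹' {x}) = ∅) (hD : D.Countable)
    (hDBC : D ⊆ B \ C) :
    ∃ E : Set I, E.Countable ∧ D ⊆ E ∧ E ⊆ B \ C ∧
      ∀ x ∈ F', AvoidsCylinders (L ∩ projRes hCB ⁻¹' {x}) D E := by
  obtain ⟨K, hK, rfl⟩ := hF'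
  have : Countable D := hD.to_subtype
  set 𝔅 := countableBasis (∀ d : D, X d)
  have hE : ∀ V ∈ 𝔅, ∀ n : ℕ, ∃ E : Set I, E.Countable ∧ D ⊆ E ∧ E ⊆ B \ C ∧
      (V.Nonempty → ∀ x ∈ K n, ¬ CoversCylinder (L ∩ projRes hCB ⁻¹' {x}) V E) := by
    intro V hV n
    by_cases hVne : V.Nonempty
    · obtain ⟨E, hE, hDE, hEBC, hEV⟩ := exists_countable_forall_not_coversCylinder hCB hlam hC hL
        (hK n) (fun x hx => hneg x (mem_iUnion_of_mem n hx)) hD hDBC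
        ((isBasis_countableBasis _).isOpen hV) hVne
      exact ⟨E, hE, hDE, hEBC, fun _ => hEV⟩
    · exact ⟨D, hD, subset_rfl, hDBC, fun h => absurd h hVne⟩
  choose! E hEc hDE hEBC hEV using hE
  refine ⟨D ∪ ⋃ V ∈ 𝔅, ⋃ n, E V n,
    hD.union ((countable_countableBasis _).biUnion fun V hV => countable_iUnion (hEc V hV)),
    subset_union_left, union_subset hDBC (iUnion₂_subset fun V hV => iUnion_subset (hEBC V hV)),
    fun x hx W hW ⟨w, hw⟩ hcov => ?_⟩
  obtain ⟨n, hxn⟩ := mem_iUnion.1 hx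
  obtain ⟨V, hV𝔅, hwV, hVW⟩ := (isBasis_countableBasis _).exists_subset_of_mem_open hw hW
  exact hEV V hV𝔅 n ⟨w, hwV⟩ x hxn ((hcov.mono hVW).of_superset (hDE V hV𝔅 n)
    fun i hi => Or.inr (mem_biUnion hV𝔅 (mem_iUnion_of_mem n hi)))

end Metric

theorem stmt5_general {I : Type u} {X : I → Type u} [∀ i, MetricSpace (X i)]
    [∀ i, CompactSpace (X i)] [∀ i, Nonempty (X i)]
    (P : Set (∀ i, X i)) (hP : IsClosed P) (f : P ≃ₜ P)
    (hf : ∀ κ : Cardinal.{u}, imageOn f (lamInterior κ P) = lamInterior κ P)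
    (lam μ : Cardinal.{u}) (hlam : Cardinal.aleph0 ≤ lam) (hlamμ : lam < μ)
    -- the `f`-admissible set `C` of cardinality `λ`, with its induced homeomorphism `f_C`
    (C : Set I) (hCcard : Cardinal.mk C = lam)
    (fC : (proj C '' P : Set (∀ c : C, X c)) ≃ₜ (proj C '' P : Set (∀ c : C, X c)))
    (hfC : ∀ p : P, (fC ⟨proj C p.1, ⟨p.1, p.2, rfl⟩⟩).1 = proj C (f p).1)
    -- the `f`-admissible set `B` of cardinality `μ` containing `C`
    (B : Set I) (hCB : C ⊆ B)
    (hBneg : ∀ F : Set (∀ b : B, X b), IsCompact F →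
      F ⊆ (proj B '' P) \ (proj B '' lamInterior lam P) → IsNegligible μ F)
    (hBctble : ∀ α ∈ B, ∃ Bα : Set I, α ∈ Bα ∧ Bα.Countable ∧ Bα ⊆ B ∧ IsAdmissible P f Bα)
    -- a `σ`-compact set `F ⊆ P_C ∖ P_C^{(λ)}`
    (F : Set (∀ c : C, X c)) (hFσ : IsSigmaCompact F)
    (hFsub : F ⊆ (proj C '' P) \ (proj C '' lamInterior lam P))
    -- an `f`-admissible set `Γ ⊆ B` containing `C` with `Γ ∖ C` countable
    (Γ : Set I) (hCΓ : C ⊆ Γ) (hΓB : Γ ⊆ B) (hΓadm : IsAdmissible P f Γ)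
    (hΓctble : (Γ \ C).Countable) :
    ∃ Λ : Set I, ∃ hΓΛ : Γ ⊆ Λ, Λ ⊆ B ∧ IsAdmissible P f Λ ∧ (Λ \ C).Countable ∧
      ∀ x, ∀ hx : x ∈ F,
        IsNowhereDense (projDiff (C := C) ''
          ({y : ∀ b : Λ, X b | projRes (hCΓ.trans hΓΛ) y = x} ∩ proj Λ '' P)) ∧
        IsNowhereDense (projDiff (C := C) ''
          ({y : ∀ b : Λ, X b | projRes (hCΓ.trans hΓΛ) y = (fC ⟨x, (hFsub hx).1⟩).1} ∩
            proj Λ '' P)) := by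
  have hPB : IsCompact (proj B '' P) := hP.isCompact.image (continuous_proj B)
  let fiber (x : ∀ c : C, X c) := proj B '' P ∩ projRes hCB ⁻¹' {x}
  have hfiber (x) : IsCompact (fiber x) :=
    hPB.inter_right (isClosed_singleton.preimage (continuous_projRes hCB))
  set F' := F ∪ imageOn fC F
  have hF' : F' ⊆ proj C '' P \ proj C '' lamInterior lam P :=
    union_subset hFsub (imageOn_subset_diff hfC (hf lam) hFsub)
  have hneg (x) (hx : x ∈ F') : lamInterior lam (fiber x) = ∅ :=
    hBneg _ (hfiber x) (inter_preimage_projRes_subset_diff hCB (hF' hx).2) lam hlamμ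
  obtain ⟨Λ, hΓΛ, hΛB, hΛadm, D, hD, hΛC, hDc, hDfiber⟩ :=
    exists_isAdmissible_diff_eq_iUnion hP.isCompact hΓB hΓadm hΓctble hBctble
      (fun D E => ∀ x ∈ F', AvoidsCylinders (fiber x) D E)
      (fun _ _ _ h hDE hEE' x hx => (h x hx).mono hDE hEE')
      (fun _ hD hDBC => exists_countable_forall_avoidsCylinders hCB hlam hCcard.le hPB
        (hFσ.union (hFσ.imageOn (hP.isCompact.image (continuous_proj C)).isClosed fC)) hneg hD hDBC)
  have hnowhere (x) (hx : x ∈ F') : IsNowhereDense (projDiff (C := C) ''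
      ({y : ∀ b : Λ, X b | projRes (hCΓ.trans hΓΛ) y = x} ∩ proj Λ '' P)) := by
    rw [image_projDiff_eq (hCΓ.trans hΓΛ) hΛB]
    exact isNowhereDense_image_projRes _ (hfiber x) hD (fun n => hΛC ▸ subset_iUnion _ n)
      hΛC.subset fun n => hDfiber n x hx
  exact ⟨Λ, hΓΛ, hΛB, hΛadm, hΛC ▸ countable_iUnion hDc, fun x hx =>
    ⟨hnowhere x (Or.inl hx), hnowhere _ (Or.inr ⟨_, ⟨⟨x, (hFsub hx).1⟩, hx, rfl⟩, rfl⟩)⟩⟩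

/-- Lemma 2.5 of the paper. -/
theorem stmt5 {I : Type u} {X : I → Type u} [∀ i, MetricSpace (X i)]
    [∀ i, CompactSpace (X i)] [∀ i, Nonempty (X i)]
    (P : Set (∀ i, X i)) (hP : IsClosed P) (f : P ≃ₜ P)
    (hf : ∀ κ : Cardinal.{u}, imageOn f (lamInterior κ P) = lamInterior κ P)
    (lam μ : Cardinal.{u}) (hlam : Cardinal.aleph0 ≤ lam) (hlamμ : lam < μ)
    -- the `f`-admissible set `C` of cardinality `λ`, with its induced homeomorphism `f_C`
    (C : Set I) (hCcard : Cardinal.mk C = lam)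
    (fC : (proj C '' P : Set (∀ c : C, X c)) ≃ₜ (proj C '' P : Set (∀ c : C, X c)))
    (hfC : ∀ p : P, (fC ⟨proj C p.1, ⟨p.1, p.2, rfl⟩⟩).1 = proj C (f p).1)
    (hCsat : proj C ⁻¹' (proj C '' lamInterior lam P) = lamInterior lam P)
    -- the `f`-admissible set `B` of cardinality `μ` containing `C`
    (B : Set I) (hCB : C ⊆ B) (hBadm : IsAdmissible P f B) (hBcard : Cardinal.mk B = μ)
    (hBsat : proj B ⁻¹' (proj B '' lamInterior μ P) = lamInterior μ P)
    (hBneg : ∀ F : Set (∀ b : B, X b), IsCompact F →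
      F ⊆ (proj B '' P) \ (proj B '' lamInterior lam P) → IsNegligible μ F)
    (hBctble : ∀ α ∈ B, ∃ Bα : Set I, α ∈ Bα ∧ Bα.Countable ∧ Bα ⊆ B ∧ IsAdmissible P f Bα)
    -- a `σ`-compact set `F ⊆ P_C ∖ P_C^{(λ)}`
    (F : Set (∀ c : C, X c)) (hFσ : IsSigmaCompact F)
    (hFsub : F ⊆ (proj C '' P) \ (proj C '' lamInterior lam P))
    -- an `f`-admissible set `Γ ⊆ B` containing `C` with `Γ ∖ C` countable
    (Γ : Set I) (hCΓ : C ⊆ Γ) (hΓB : Γ ⊆ B) (hΓadm : IsAdmissible P f Γ)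
    (hΓctble : (Γ \ C).Countable) :
    ∃ Λ : Set I, ∃ hΓΛ : Γ ⊆ Λ, Λ ⊆ B ∧ IsAdmissible P f Λ ∧ (Λ \ C).Countable ∧
      ∀ x, ∀ hx : x ∈ F,
        IsNowhereDense (projDiff (C := C) ''
          ({y : ∀ b : Λ, X b | projRes (hCΓ.trans hΓΛ) y = x} ∩ proj Λ '' P)) ∧
        IsNowhereDense (projDiff (C := C) ''
          ({y : ∀ b : Λ, X b | projRes (hCΓ.trans hΓΛ) y = (fC ⟨x, (hFsub hx).1⟩).1} ∩
            proj Λ '' P)) :=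
  stmt5_general P hP f hf lam μ hlam hlamμ C hCcard fC hfC B hCB hBneg hBctble F hFσ hFsub Γ hCΓ hΓB
    hΓadm hΓctble
end

section
/- Let X = ∏_{α∈A} X_α be a product of nonempty compact metric spaces with A uncountable, and let K ⊆ H(X) be a Lindelöf subset of the group H(X) of self-homeomorphisms of X with the compact-open topology. Then for every countable set B ⊆ A there is a countable set Λ(B) ⊆ A containing B such that for every f ∈ K there exist homeomorphisms f_{Λ(B)}, g_{Λ(B)} ∈ H(X_{Λ(B)}) with π_{Λ(B)} ∘ f = f_{Λ(B)} ∘ π_{Λ(B)} and π_{Λ(B)} ∘ f^{-1} = g_{Λ(B)} ∘ π_{Λ(B)}. -/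
/-!
A continuous map on a compact product is uniformly continuous, so each of its coordinates is
determined up to `ε` by finitely many coordinates of the argument. Covering a Lindelöf family
of maps by countably many `ε`-balls of the sup distance makes this uniform over the family with
countably many coordinates, and letting `ε → 0` gives exact dependence on countably many
coordinates. For compact Hausdorff `X`, inversion is continuous on `H(X)`, so `K ∪ K⁻¹` is
Lindelöf as well. Closing `B` off countably often under "add the coordinates on which the
coordinates already present depend" yields `Λ(B)` such that every `f` and `f⁻¹` with `f ∈ K`
descend to mutually inverse continuous maps of `X_{Λ(B)}`.
-/

universe u

open Set

/-- A self-homeomorphism viewed as an element of `C(Z, Z)`; the group `H(Z)` of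
self-homeomorphisms with the compact-open topology is the range of this map with the
subspace topology. -/
def toCM {Z : Type u} [TopologicalSpace Z] (h : Z ≃ₜ Z) : C(Z, Z) :=
  ⟨⇑h, h.continuous⟩

section CountableClosure

variable {I : Type*}

theorem exists_countable_superset_closed {R : I → Set I → Prop}
    (hmono : ∀ α ⦃D D'⦄, D ⊆ D' → R α D → R α D')
    (hR : ∀ α, ∃ D : Set I, D.Countable ∧ R α D) {B : Set I} (hB : B.Countable) :
    ∃ Λ : Set I, Λ.Countable ∧ B ⊆ Λ ∧ ∀ α ∈ Λ, R α Λ := by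
  choose D hDcount hRD using hR
  let L : ℕ → Set I := fun n => Nat.rec B (fun _ L => L ∪ ⋃ α ∈ L, D α) n
  have hL_succ (n : ℕ) : L (n + 1) = L n ∪ ⋃ α ∈ L n, D α := rfl
  have hL_count (n : ℕ) : (L n).Countable := by
    induction n with
    | zero => exact hB
    | succ n ih => exact ih.union (ih.biUnion fun α _ => hDcount α)
  refine ⟨⋃ n, L n, countable_iUnion hL_count, subset_iUnion L 0, fun α hα => ?_⟩
  obtain ⟨n, hn⟩ := mem_iUnion.1 hα
  refine hmono α ?_ (hRD α)
  calc D α ⊆ L (n + 1) := hL_succ n ▸ subset_union_of_subset_right (subset_biUnion_of_mem hn) _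
    _ ⊆ ⋃ n, L n := subset_iUnion L (n + 1)

end CountableClosure

section Dependence

variable {I : Type*} {X : I → Type*} {Y : Type*}

theorem UniformContinuous.exists_finite_dist_lt [∀ i, UniformSpace (X i)] [PseudoMetricSpace Y]
    {g : (∀ i, X i) → Y} (hg : UniformContinuous g) {ε : ℝ} (hε : 0 < ε) :
    ∃ S : Set I, S.Finite ∧ ∀ x y : ∀ i, X i, (∀ i ∈ S, x i = y i) → dist (g x) (g y) < ε := by
  have hW := hg (Metric.dist_mem_uniformity hε)
  rw [Filter.mem_map, Pi.uniformity, Filter.mem_iInf] at hW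
  obtain ⟨S, hS, V, hV, hWV⟩ := hW
  refine ⟨S, hS, fun x y hxy => ?_⟩
  suffices h : (x, y) ∈ ⋂ i, V i by rw [← hWV] at h; exact h
  refine mem_iInter.2 fun i => ?_
  obtain ⟨U, hU, hUV⟩ := Filter.mem_comap.1 (hV i)
  exact hUV (by simpa only [mem_preimage, hxy i i.2] using refl_mem_uniformity hU)

variable [∀ i, UniformSpace (X i)] [∀ i, CompactSpace (X i)]

/-- Countably many `ε / 3`-balls of the sup distance cover `S`, and each centre is
`ε / 3`-determined by finitely many coordinates. -/
theorem IsLindelof.exists_countable_dist_lt [PseudoMetricSpace Y] {S : Set C((∀ i, X i), Y)}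
    (hS : IsLindelof S) {ε : ℝ} (hε : 0 < ε) :
    ∃ D : Set I, D.Countable ∧
      ∀ g ∈ S, ∀ x y : ∀ i, X i, (∀ i ∈ D, x i = y i) → dist (g x) (g y) < ε := by
  have hε3 : 0 < ε / 3 := by positivity
  choose T hT_fin hT using fun g : C((∀ i, X i), Y) =>
    (CompactSpace.uniformContinuous_of_continuous g.continuous).exists_finite_dist_lt hε3
  obtain ⟨r, hr_count, hr_cover⟩ := hS.elim_countable_subcover
    (fun g : S => Metric.ball (g : C((∀ i, X i), Y)) (ε / 3)) (fun _ => Metric.isOpen_ball)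
    fun g hg => mem_iUnion.2 ⟨⟨g, hg⟩, Metric.mem_ball_self hε3⟩
  refine ⟨⋃ c ∈ r, T c, hr_count.biUnion fun c _ => (hT_fin c).countable,
    fun g hg x y hxy => ?_⟩
  obtain ⟨c, hc_mem, hgc⟩ := mem_iUnion₂.1 (hr_cover hg)
  have hclose (z : ∀ i, X i) : dist (g z) (c.1 z) < ε / 3 :=
    (ContinuousMap.dist_apply_le_dist z).trans_lt hgc
  have hc : dist (c.1 x) (c.1 y) < ε / 3 := hT _ x y fun i hi => hxy i (mem_biUnion hc_mem hi)
  calc dist (g x) (g y) ≤ dist (g x) (c.1 x) + dist (c.1 x) (c.1 y) + dist (c.1 y) (g y) :=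
        dist_triangle4 _ _ _ _
    _ < ε / 3 + ε / 3 + ε / 3 := by
        gcongr
        · exact hclose x
        · exact dist_comm (g y) _ ▸ hclose y
    _ = ε := by ring

theorem IsLindelof.exists_countable_dependsOn [MetricSpace Y] {S : Set C((∀ i, X i), Y)}
    (hS : IsLindelof S) : ∃ D : Set I, D.Countable ∧ ∀ g ∈ S, DependsOn g D := by
  choose D hD_count hD using fun n : ℕ =>
    hS.exists_countable_dist_lt (ε := 1 / (n + 1)) Nat.one_div_pos_of_nat
  refine ⟨⋃ n, D n, countable_iUnion hD_count, fun g hg x y hxy => ?_⟩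
  refine eq_of_forall_dist_le fun ε hε => ?_
  obtain ⟨n, hn⟩ := exists_nat_one_div_lt hε
  exact (hD n g hg x y fun i hi => hxy i (mem_iUnion.2 ⟨n, hi⟩)).le.trans hn.le

end Dependence

section Projection

variable {I : Type u} {X : I → Type u}

open Classical in
noncomputable def extendBy (x₀ : ∀ i, X i) (Λ : Set I) (u : ∀ b : Λ, X b) : ∀ i, X i :=
  fun i => if h : i ∈ Λ then u ⟨i, h⟩ else x₀ i

theorem proj_extendBy (x₀ : ∀ i, X i) (Λ : Set I) (u : ∀ b : Λ, X b) :
    proj Λ (extendBy x₀ Λ u) = u := by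
  funext b
  simp [proj, extendBy, b.2]

theorem extendBy_proj_apply (x₀ x : ∀ i, X i) {Λ : Set I} {i : I} (hi : i ∈ Λ) :
    extendBy x₀ Λ (proj Λ x) i = x i := by
  simp [proj, extendBy, hi]

theorem continuous_extendBy [∀ i, TopologicalSpace (X i)] (x₀ : ∀ i, X i) (Λ : Set I) :
    Continuous (extendBy x₀ Λ) := by
  refine continuous_pi fun i => ?_
  by_cases hi : i ∈ Λ
  · simpa [extendBy, hi] using continuous_apply (⟨i, hi⟩ : Λ)
  · simpa [extendBy, hi] using continuous_const

theorem continuous_proj_s9 [∀ i, TopologicalSpace (X i)] (Λ : Set I) :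
    Continuous fun x : ∀ i, X i => proj Λ x :=
  continuous_pi fun b => continuous_apply (b : I)

theorem exists_homeomorph_proj_apply [∀ i, TopologicalSpace (X i)] [∀ i, Nonempty (X i)]
    {e : (∀ i, X i) ≃ₜ (∀ i, X i)} {Λ : Set I}
    (he : DependsOn (proj Λ ∘ e) Λ) (he_symm : DependsOn (proj Λ ∘ e.symm) Λ) :
    ∃ eΛ : (∀ b : Λ, X b) ≃ₜ (∀ b : Λ, X b), ∀ x, proj Λ (e x) = eΛ (proj Λ x) := by
  let σ := extendBy (Classical.arbitrary (∀ i, X i)) Λ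
  have hσ (x : ∀ i, X i) : ∀ i ∈ Λ, x i = σ (proj Λ x) i :=
    fun i hi => (extendBy_proj_apply _ x hi).symm
  have hF (x : ∀ i, X i) : proj Λ (e x) = proj Λ (e (σ (proj Λ x))) := he (hσ x)
  have hG (x : ∀ i, X i) : proj Λ (e.symm x) = proj Λ (e.symm (σ (proj Λ x))) := he_symm (hσ x)
  refine ⟨{ toFun := fun u => proj Λ (e (σ u))
            invFun := fun u => proj Λ (e.symm (σ u))
            left_inv := fun u => ?_
            right_inv := fun u => ?_
            continuous_toFun := (continuous_proj_s9 Λ).comp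
              (e.continuous.comp (continuous_extendBy _ Λ))
            continuous_invFun := (continuous_proj_s9 Λ).comp
              (e.symm.continuous.comp (continuous_extendBy _ Λ)) }, hF⟩
  · simp only [← hG, Homeomorph.symm_apply_apply, σ, proj_extendBy]
  · simp only [← hF, Homeomorph.apply_symm_apply, σ, proj_extendBy]

end Projection

section Inverse

variable {Z : Type u} [TopologicalSpace Z]

theorem toCM_injective : Function.Injective (toCM (Z := Z)) :=
  fun _ _ h => Homeomorph.ext fun z => DFunLike.congr_fun h z

theorem Equiv.mapsTo_symm_iff_mapsTo_compl {α β : Type*} (f : α ≃ β) {s : Set β} {t : Set α} :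
    MapsTo f.symm s t ↔ MapsTo f tᶜ sᶜ :=
  ⟨fun h a ha hfa => ha (by simpa using h hfa),
    fun h b hb => by_contra fun hbt => h hbt ((f.apply_symm_apply b).symm ▸ hb)⟩

/-- The compact-open subbasic set `{g | MapsTo g⁻¹ C U}` is the subbasic set
`{g | MapsTo g Uᶜ Cᶜ}`, as `Uᶜ` is compact and `Cᶜ` is open. -/
theorem continuousOn_toCM_symm_invFun [CompactSpace Z] [T2Space Z] :
    ContinuousOn (fun g => toCM (Function.invFun toCM g).symm) (range (toCM (Z := Z))) := by
  rw [continuousOn_iff_continuous_domRestrict]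
  refine ContinuousMap.continuous_compactOpen.2 fun C hC U hU => ?_
  convert (ContinuousMap.isOpen_setOfPred_mapsTo hU.isClosed_compl.isCompact
    hC.isClosed.isOpen_compl).preimage continuous_subtype_val using 1
  ext ⟨_, f, rfl⟩
  simp only [domRestrict_apply, Function.leftInverse_invFun toCM_injective f, mem_ofPred_eq,
    mem_preimage]
  exact f.toEquiv.mapsTo_symm_iff_mapsTo_compl

theorem IsLindelof.image_toCM_symm [CompactSpace Z] [T2Space Z] {K : Set (Z ≃ₜ Z)}
    (hK : IsLindelof (toCM '' K)) : IsLindelof (toCM '' (Homeomorph.symm '' K)) := by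
  convert hK.image_of_continuousOn
    (continuousOn_toCM_symm_invFun.mono (image_subset_range _ _)) using 1
  simp only [image_image, Function.leftInverse_invFun toCM_injective _]

end Inverse

section Closure

variable {I : Type u} {X : I → Type u} [∀ i, MetricSpace (X i)] [∀ i, CompactSpace (X i)]

theorem IsLindelof.exists_countable_superset_dependsOn_proj
    {S : Set C((∀ i, X i), (∀ i, X i))} (hS : IsLindelof S) {B : Set I} (hB : B.Countable) :
    ∃ Λ : Set I, Λ.Countable ∧ B ⊆ Λ ∧ ∀ g ∈ S, DependsOn (proj Λ ∘ g) Λ := by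
  have hcoord (α : I) : ∃ D : Set I, D.Countable ∧ ∀ g ∈ S, DependsOn (fun x => g x α) D := by
    obtain ⟨D, hD, hdep⟩ := (hS.image (ContinuousMap.continuous_postcomp
      ⟨fun x : ∀ i, X i => x α, continuous_apply α⟩)).exists_countable_dependsOn
    exact ⟨D, hD, fun g hg => hdep _ (mem_image_of_mem _ hg)⟩
  obtain ⟨Λ, hΛ, hBΛ, hdep⟩ := exists_countable_superset_closed
    (fun _ _ _ hDD' h g hg => (h g hg).mono hDD') hcoord hB
  exact ⟨Λ, hΛ, hBΛ, fun g hg x y hxy => funext fun b => hdep b b.2 g hg hxy⟩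

end Closure

theorem stmt9_general {I : Type u} {X : I → Type u} [∀ i, MetricSpace (X i)]
    [∀ i, CompactSpace (X i)] [∀ i, Nonempty (X i)]
    (K : Set ((∀ i, X i) ≃ₜ (∀ i, X i))) (hK : IsLindelof (toCM '' K))
    (B : Set I) (hB : B.Countable) :
    ∃ Λ : Set I, Λ.Countable ∧ B ⊆ Λ ∧
      ∀ f ∈ K, ∃ fΛ gΛ : (∀ b : Λ, X b) ≃ₜ (∀ b : Λ, X b),
        (∀ x : ∀ i, X i, proj Λ (f x) = fΛ (proj Λ x)) ∧
        (∀ x : ∀ i, X i, proj Λ (f.symm x) = gΛ (proj Λ x)) := by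
  obtain ⟨Λ, hΛ, hBΛ, hdep⟩ :=
    (hK.union hK.image_toCM_symm).exists_countable_superset_dependsOn_proj hB
  refine ⟨Λ, hΛ, hBΛ, fun f hf => ?_⟩
  obtain ⟨fΛ, hfΛ⟩ := exists_homeomorph_proj_apply (hdep _ (.inl ⟨f, hf, rfl⟩))
    (hdep _ (.inr ⟨f.symm, ⟨f, hf, rfl⟩, rfl⟩))
  refine ⟨fΛ, fΛ.symm, hfΛ, fun x => ?_⟩
  rw [fΛ.eq_symm_apply, ← hfΛ, Homeomorph.apply_symm_apply]

/-- Claim 3.3 of the paper: for every countable `B ⊆ I` there is a countable `Λ(B) ⊇ B`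
such that for every `f` in the Lindelöf set `K ⊆ H(X)`, both `f` and `f⁻¹` induce
homeomorphisms of `X_{Λ(B)}` commuting with the projection `π_{Λ(B)}`. -/
theorem stmt9 {I : Type u} {X : I → Type u} [∀ i, MetricSpace (X i)]
    [∀ i, CompactSpace (X i)] [∀ i, Nonempty (X i)] [Uncountable I]
    (K : Set ((∀ i, X i) ≃ₜ (∀ i, X i))) (hK : IsLindelof (toCM '' K))
    (B : Set I) (hB : B.Countable) :
    ∃ Λ : Set I, Λ.Countable ∧ B ⊆ Λ ∧
      ∀ f ∈ K, ∃ fΛ gΛ : (∀ b : Λ, X b) ≃ₜ (∀ b : Λ, X b),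
        (∀ x : ∀ i, X i, proj Λ (f x) = fΛ (proj Λ x)) ∧
        (∀ x : ∀ i, X i, proj Λ (f.symm x) = gΛ (proj Λ x)) :=
  stmt9_general K hK B hB
end
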